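/- Let G be a finite group of order n ≥ 3, let k ≥ 1, let x ∈ G, and let (a, b) be a uniformly random element of G^k × G^k. For v = (i, j) ∈ V = [k] × [k], let I_v(x) be the indicator of {x = a_i·b_j or x = b_j·a_i}, and let Γ be the graph on V with (i, j) ~ (ℓ, m) iff (i = ℓ and j ≠ m) or (i ≠ ℓ and j = m). Define Δ_I(x) = (1/2)·∑_{v ∈ V} ∑_{u ~ v} E[I_v(x)·I_u(x)] · ∏_{w ~ {v,u}} (1 − E[I_w(x)])^{-1} and Δ*_I(x) = (1/2)·∑_{v ∈ V} ∑_{u ~ v} E[I_v(x)]·E[I_u(x)] · ∏_{w ~ {v,u}} (1 − E[I_w(x)])^{-1}, where w ~ {v,u} means w is adjacent to v or to u. Then both Δ_I(x) ≤ 4·(k³/n²)·exp(6k/(n−2)) and Δ*_I(x) ≤ 4·(k³/n²)·exp(6k/(n−2)). -/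

import Mathlib

open scoped Classical

/-- The adjacency relation of the graph `Γ` on `[k] × [k]`:
`(i, j) ~ (ℓ, m)` iff (`i = ℓ` and `j ≠ m`) or (`i ≠ ℓ` and `j = m`). -/
def GammaAdj {k : ℕ} (v u : Fin k × Fin k) : Prop :=
  (v.1 = u.1 ∧ v.2 ≠ u.2) ∨ (v.1 ≠ u.1 ∧ v.2 = u.2)

open Classical in
/-- The indicator `I_v(x)` of the event `{x = a_i·b_j or x = b_j·a_i}`, for `v = (i, j)`,
as a function of the sample point `ω = (a, b) ∈ G^k × G^k`. -/
noncomputable def indicI (G : Type*) [Group G] {k : ℕ} (v : Fin k × Fin k) (x : G)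
    (ω : (Fin k → G) × (Fin k → G)) : ℝ :=
  if x = ω.1 v.1 * ω.2 v.2 ∨ x = ω.2 v.2 * ω.1 v.1 then 1 else 0

/-- Expectation with respect to the uniform measure on `G^k × G^k`. -/
noncomputable def unifExp (G : Type*) [Fintype G] {k : ℕ}
    (f : (Fin k → G) × (Fin k → G) → ℝ) : ℝ :=
  (∑ ω : (Fin k → G) × (Fin k → G), f ω) / (Fintype.card ((Fin k → G) × (Fin k → G)) : ℝ)

/-- `Δ_I(x)` of Suen's inequality for the family `{I_v(x)}_{v ∈ V}` and the dependency
graph `Γ`. -/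
noncomputable def DeltaI (G : Type*) [Group G] [Fintype G] (k : ℕ) (x : G) : ℝ :=
  (1/2) * ∑ v : Fin k × Fin k, ∑ u ∈ Finset.univ.filter (fun u => GammaAdj v u),
    unifExp G (fun ω => indicI G v x ω * indicI G u x ω) *
      ∏ w ∈ Finset.univ.filter (fun w => GammaAdj w v ∨ GammaAdj w u),
        (1 - unifExp G (indicI G w x))⁻¹

/-- `Δ*_I(x)` of Suen's inequality for the family `{I_v(x)}_{v ∈ V}` and the dependency
graph `Γ`. -/
noncomputable def DeltaIStar (G : Type*) [Group G] [Fintype G] (k : ℕ) (x : G) : ℝ :=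
  (1/2) * ∑ v : Fin k × Fin k, ∑ u ∈ Finset.univ.filter (fun u => GammaAdj v u),
    unifExp G (indicI G v x) * unifExp G (indicI G u x) *
      ∏ w ∈ Finset.univ.filter (fun w => GammaAdj w v ∨ GammaAdj w u),
        (1 - unifExp G (indicI G w x))⁻¹

/-! Each `I_v(x)` has mean at most `2/n`: with `a` fixed, the event pins `b_j` to one of the two
elements `a_i⁻¹ x`, `x a_i⁻¹`. Two adjacent vertices `(i, j)`, `(i, m)` of the same row involve the
independent coordinates `b_j`, `b_m`, so `E[I_v I_u] ≤ (2/n)²`; columns reduce to rows by swapping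
`a` and `b`. Each factor `(1 - E[I_w])⁻¹` is at most `(1 - 2/n)⁻¹ ≤ exp (2/(n-2))`, the
neighbourhood of an edge lies in three lines of the grid and so has at most `3k` vertices, and
there are at most `k² · 2k` ordered edges. -/

open Finset

section PiSums

variable {α ι : Type*} [Fintype α] [Fintype ι] [DecidableEq ι]

theorem Fintype.sum_pi_prod_apply {R : Type*} [CommSemiring R] (s : Finset ι) (f : α → R) :
    ∑ b : ι → α, ∏ i ∈ s, f (b i) = (Fintype.card α : R) ^ #sᶜ * (∑ y, f y) ^ #s := by
  have key := Fintype.prod_sum (fun (i : ι) (y : α) => if i ∈ s then f y else 1)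
  simp only [Fintype.prod_ite_mem] at key
  rw [← key]
  simp [Finset.prod_ite, mul_comm, Finset.compl_eq_univ_sdiff, Finset.filter_notMem_eq_sdiff]

theorem Fintype.sum_pi_prod_apply_le [Nonempty α] (s : Finset ι) {f : α → ℝ} {c : ℝ}
    (hf : ∀ y, 0 ≤ f y) (hc : ∑ y, f y ≤ c) :
    ∑ b : ι → α, ∏ i ∈ s, f (b i) ≤ (c / Fintype.card α) ^ #s * Fintype.card α ^ Fintype.card ι := by
  have hα : (0 : ℝ) < Fintype.card α := by exact_mod_cast Fintype.card_pos
  rw [Fintype.sum_pi_prod_apply, ← card_add_card_compl s, pow_add, div_pow]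
  field_simp
  gcongr
  exact Fintype.sum_nonneg hf

end PiSums

theorem Finset.card_filter_fst_mem_or_snd_mem_le {α β : Type*} [Fintype α] [Fintype β]
    [DecidableEq α] [DecidableEq β] (A : Finset α) (B : Finset β) :
    #{w : α × β | w.1 ∈ A ∨ w.2 ∈ B} ≤ #A * Fintype.card β + Fintype.card α * #B := by
  have hA : ({w | w.1 ∈ A} : Finset (α × β)) = A ×ˢ univ := by ext; simp
  have hB : ({w | w.2 ∈ B} : Finset (α × β)) = univ ×ˢ B := by ext; simp
  rw [filter_or, hA, hB]
  exact (card_union_le _ _).trans_eq (by simp [card_product])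

theorem Real.inv_one_sub_le_exp {p q : ℝ} (hq : q < 1) (hpq : p ≤ q) :
    (1 - p)⁻¹ ≤ Real.exp (q / (1 - q)) :=
  calc (1 - p)⁻¹ ≤ (1 - q)⁻¹ := inv_anti₀ (by linarith) (by linarith)
    _ = q / (1 - q) + 1 := by field_simp [(by linarith : 1 - q ≠ 0)]; ring
    _ ≤ Real.exp (q / (1 - q)) := Real.add_one_le_exp _

section Graph

variable {k : ℕ} {v u : Fin k × Fin k}

theorem GammaAdj.swap (h : GammaAdj v u) : GammaAdj v.swap u.swap := by
  unfold GammaAdj at *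
  tauto

theorem GammaAdj.fst_eq_or_snd_eq (h : GammaAdj v u) : v.1 = u.1 ∨ v.2 = u.2 := by
  rcases h with h | h
  exacts [.inl h.1, .inr h.2]

theorem card_filter_gammaAdj_le (v : Fin k × Fin k) : #{u | GammaAdj v u} ≤ 2 * k := by
  refine (card_le_card fun w hw => ?_).trans
    ((card_filter_fst_mem_or_snd_mem_le {v.1} {v.2}).trans_eq (by simp [two_mul]))
  simp only [mem_filter, mem_univ, true_and, mem_singleton] at hw ⊢
  exact hw.fst_eq_or_snd_eq.imp Eq.symm Eq.symm

theorem GammaAdj.card_filter_gammaAdj_or_gammaAdj_le (h : GammaAdj v u) :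
    #{w | GammaAdj w v ∨ GammaAdj w u} ≤ 3 * k := by
  have hpairs : #({v.1, u.1} : Finset (Fin k)) + #({v.2, u.2} : Finset (Fin k)) ≤ 3 := by
    rcases h with ⟨h1, -⟩ | ⟨-, h2⟩
    · rw [h1, pair_eq_singleton, card_singleton]; linarith [card_le_two (a := v.2) (b := u.2)]
    · rw [h2, pair_eq_singleton, card_singleton]; linarith [card_le_two (a := v.1) (b := u.1)]
  refine (card_le_card fun w hw => ?_).trans
    ((card_filter_fst_mem_or_snd_mem_le {v.1, u.1} {v.2, u.2}).trans ?_)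
  · simp only [mem_filter, mem_univ, true_and, mem_insert, mem_singleton] at hw ⊢
    rcases hw with hw | hw <;> rcases hw.fst_eq_or_snd_eq with h' | h' <;> simp [h']
  · simp only [Fintype.card_fin]; nlinarith

theorem half_sum_sum_gammaAdj_le (t : Fin k × Fin k → Fin k × Fin k → ℝ) {B : ℝ} (hB : 0 ≤ B)
    (ht : ∀ v u, GammaAdj v u → t v u ≤ B) :
    (1 / 2) * ∑ v, ∑ u ∈ univ.filter (fun u => GammaAdj v u), t v u ≤ (k : ℝ) ^ 3 * B := by
  have hrow (v : Fin k × Fin k) : ∑ u ∈ univ.filter (fun u => GammaAdj v u), t v u ≤ 2 * k * B :=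
    calc _ ≤ #{u | GammaAdj v u} • B :=
          sum_le_card_nsmul _ _ _ fun u hu => ht v u (mem_filter.mp hu).2
      _ ≤ 2 * k * B := by
          rw [nsmul_eq_mul]
          gcongr
          exact_mod_cast card_filter_gammaAdj_le v
  calc (1 / 2) * ∑ v, ∑ u ∈ univ.filter (fun u => GammaAdj v u), t v u
      ≤ (1 / 2) * ∑ _v : Fin k × Fin k, 2 * k * B := by gcongr with v; exact hrow v
    _ = (k : ℝ) ^ 3 * B := by
        simp only [sum_const, card_univ, Fintype.card_prod, Fintype.card_fin, nsmul_eq_mul,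
          Nat.cast_mul]
        ring

end Graph

section Group

variable {G : Type*} [Group G] [Fintype G] {k : ℕ}

theorem sum_ite_eq_mul_or_eq_mul_le_two (x c : G) :
    ∑ y : G, (if x = c * y ∨ x = y * c then (1 : ℝ) else 0) ≤ 2 := by
  rw [sum_boole]
  have hsub : ({y | x = c * y ∨ x = y * c} : Finset G) ⊆ {c⁻¹ * x, x * c⁻¹} := by
    intro y hy
    simp only [mem_filter, mem_univ, true_and] at hy
    rcases hy with rfl | rfl <;> simp
  exact_mod_cast (card_le_card hsub).trans card_le_two

omit [Fintype G] in
theorem indicI_swap (v : Fin k × Fin k) (x : G) (ω : (Fin k → G) × (Fin k → G)) :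
    indicI G v.swap x ω = indicI G v x ω.swap := by
  simp only [indicI, Prod.fst_swap, Prod.snd_swap, or_comm]

omit [Group G] in
theorem unifExp_comp_swap (f : (Fin k → G) × (Fin k → G) → ℝ) :
    unifExp G (f ∘ Prod.swap) = unifExp G f := by
  unfold unifExp
  rw [← (Equiv.prodComm _ _).sum_comp f]
  rfl

theorem unifExp_le_of_forall_sum_le {f : (Fin k → G) × (Fin k → G) → ℝ} {c : ℝ}
    (h : ∀ a, ∑ b, f (a, b) ≤ c * Fintype.card G ^ k) : unifExp G f ≤ c := by
  have hpos : (0 : ℝ) < Fintype.card ((Fin k → G) × (Fin k → G)) := by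
    exact_mod_cast Fintype.card_pos
  rw [unifExp, div_le_iff₀ hpos, Fintype.sum_prod_type]
  calc ∑ a, ∑ b, f (a, b) ≤ ∑ _a : Fin k → G, c * Fintype.card G ^ k := sum_le_sum fun a _ => h a
    _ = c * Fintype.card ((Fin k → G) × (Fin k → G)) := by
        simp only [sum_const, card_univ, Fintype.card_prod, Fintype.card_pi, prod_const,
          Fintype.card_fin, nsmul_eq_mul, Nat.cast_pow, Nat.cast_mul]
        ring

theorem unifExp_prod_indicI_le (i : Fin k) (s : Finset (Fin k)) (x : G) :
    unifExp G (fun ω => ∏ j ∈ s, indicI G (i, j) x ω) ≤ (2 / Fintype.card G) ^ #s := by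
  refine unifExp_le_of_forall_sum_le fun a => ?_
  have := Fintype.sum_pi_prod_apply_le s (fun y => by positivity)
    (sum_ite_eq_mul_or_eq_mul_le_two x (a i))
  rwa [Fintype.card_fin] at this

theorem unifExp_indicI_le (v : Fin k × Fin k) (x : G) :
    unifExp G (indicI G v x) ≤ 2 / Fintype.card G := by
  simpa using unifExp_prod_indicI_le v.1 {v.2} x

theorem GammaAdj.unifExp_indicI_mul_le {v u : Fin k × Fin k} (h : GammaAdj v u) (x : G) :
    unifExp G (fun ω => indicI G v x ω * indicI G u x ω) ≤ 4 / Fintype.card G ^ 2 := by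
  wlog h1 : v.1 = u.1 generalizing v u
  · have h2 : v.2 = u.2 := h.fst_eq_or_snd_eq.resolve_left h1
    rw [← unifExp_comp_swap]
    simpa [Function.comp_def, indicI_swap] using this h.swap h2
  obtain ⟨i, j⟩ := v
  obtain ⟨i', m⟩ := u
  obtain rfl : i = i' := h1
  have hjm : j ≠ m := by rcases h with h | h <;> simp_all
  have := unifExp_prod_indicI_le i {j, m} x
  simp only [prod_pair hjm, card_pair hjm] at this
  exact this.trans_eq (by ring)

theorem unifExp_indicI_nonneg (v : Fin k × Fin k) (x : G) : 0 ≤ unifExp G (indicI G v x) :=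
  div_nonneg (sum_nonneg fun ω _ => by unfold indicI; positivity) (Nat.cast_nonneg _)

theorem two_div_card_lt_one (hG : 3 ≤ Fintype.card G) : 2 / (Fintype.card G : ℝ) < 1 := by
  have hn : (3 : ℝ) ≤ Fintype.card G := by exact_mod_cast hG
  rw [div_lt_one (by positivity)]
  linarith

theorem inv_one_sub_unifExp_indicI_le (hG : 3 ≤ Fintype.card G) (w : Fin k × Fin k) (x : G) :
    (1 - unifExp G (indicI G w x))⁻¹ ≤ Real.exp (2 / (Fintype.card G - 2)) := by
  have hn : (3 : ℝ) ≤ Fintype.card G := by exact_mod_cast hG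
  convert Real.inv_one_sub_le_exp (two_div_card_lt_one hG) (unifExp_indicI_le w x) using 2
  field_simp [(by linarith : (Fintype.card G : ℝ) - 2 ≠ 0)]

theorem inv_one_sub_unifExp_indicI_nonneg (hG : 3 ≤ Fintype.card G) (w : Fin k × Fin k) (x : G) :
    0 ≤ (1 - unifExp G (indicI G w x))⁻¹ :=
  inv_nonneg.mpr <| sub_nonneg.mpr <| (unifExp_indicI_le w x).trans (two_div_card_lt_one hG).le

theorem GammaAdj.prod_inv_one_sub_unifExp_indicI_le (hG : 3 ≤ Fintype.card G)
    {v u : Fin k × Fin k} (h : GammaAdj v u) (x : G) :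
    ∏ w ∈ univ.filter (fun w => GammaAdj w v ∨ GammaAdj w u), (1 - unifExp G (indicI G w x))⁻¹
      ≤ Real.exp (6 * k / (Fintype.card G - 2)) := by
  have hn : (3 : ℝ) ≤ Fintype.card G := by exact_mod_cast hG
  calc _ ≤ ∏ _w ∈ univ.filter (fun w => GammaAdj w v ∨ GammaAdj w u),
          Real.exp (2 / (Fintype.card G - 2)) :=
        prod_le_prod (fun w _ => inv_one_sub_unifExp_indicI_nonneg hG w x)
          fun w _ => inv_one_sub_unifExp_indicI_le hG w x
    _ ≤ Real.exp (2 / (Fintype.card G - 2)) ^ (3 * k) := by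
        rw [prod_const]
        exact pow_le_pow_right₀ (Real.one_le_exp (div_nonneg zero_le_two (by linarith)))
          h.card_filter_gammaAdj_or_gammaAdj_le
    _ = Real.exp (6 * k / (Fintype.card G - 2)) := by
        rw [← Real.exp_nat_mul]
        push_cast
        ring_nf

end Group

theorem delta_bounds_general (G : Type*) [Group G] [Fintype G] (hG : 3 ≤ Fintype.card G)
    (k : ℕ) (x : G) :
    DeltaI G k x ≤
      4 * ((k : ℝ) ^ 3 / (Fintype.card G : ℝ) ^ 2) *
        Real.exp (6 * k / ((Fintype.card G : ℝ) - 2)) ∧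
    DeltaIStar G k x ≤
      4 * ((k : ℝ) ^ 3 / (Fintype.card G : ℝ) ^ 2) *
        Real.exp (6 * k / ((Fintype.card G : ℝ) - 2)) := by
  have hprod {v u : Fin k × Fin k} (h : GammaAdj v u) :=
    h.prod_inv_one_sub_unifExp_indicI_le hG x
  have hprod_nonneg (v u : Fin k × Fin k) :
      0 ≤ ∏ w ∈ univ.filter (fun w => GammaAdj w v ∨ GammaAdj w u),
        (1 - unifExp G (indicI G w x))⁻¹ :=
    prod_nonneg fun w _ => inv_one_sub_unifExp_indicI_nonneg hG w x
  rw [show ∀ E : ℝ, 4 * ((k : ℝ) ^ 3 / Fintype.card G ^ 2) * E =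
    k ^ 3 * (4 / Fintype.card G ^ 2 * E) from fun E => by ring]
  constructor
  · refine half_sum_sum_gammaAdj_le _ (by positivity) fun v u h => ?_
    exact mul_le_mul (h.unifExp_indicI_mul_le x) (hprod h) (hprod_nonneg v u) (by positivity)
  · refine half_sum_sum_gammaAdj_le _ (by positivity) fun v u h => ?_
    have hmul : unifExp G (indicI G v x) * unifExp G (indicI G u x) ≤
        4 / (Fintype.card G : ℝ) ^ 2 :=
      calc _ ≤ 2 / (Fintype.card G : ℝ) * (2 / Fintype.card G) :=
            mul_le_mul (unifExp_indicI_le v x) (unifExp_indicI_le u x)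
              (unifExp_indicI_nonneg u x) (by positivity)
        _ = 4 / (Fintype.card G : ℝ) ^ 2 := by ring
    exact mul_le_mul hmul (hprod h) (hprod_nonneg v u) (by positivity)

/-- Both `Δ_I(x)` and `Δ*_I(x)` are at most `4·(k³/n²)·exp(6k/(n−2))`. -/
theorem delta_bounds (G : Type*) [Group G] [Fintype G] (hG : 3 ≤ Fintype.card G)
    (k : ℕ) (hk : 1 ≤ k) (x : G) :
    DeltaI G k x ≤
      4 * ((k : ℝ) ^ 3 / (Fintype.card G : ℝ) ^ 2) *
        Real.exp (6 * k / ((Fintype.card G : ℝ) - 2)) ∧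
    DeltaIStar G k x ≤
      4 * ((k : ℝ) ^ 3 / (Fintype.card G : ℝ) ^ 2) *
        Real.exp (6 * k / ((Fintype.card G : ℝ) - 2)) :=
  delta_bounds_general G hG k x
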